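/- Let Δ ⊆ ℝ^d be a d-dimensional polytope with 0 in its interior. Then Δ is Q-reflexive if and only if Δ* is an almost reflexive lattice polytope. In particular, every reflexive polytope is both Q-reflexive and almost reflexive. -/

import Mathlib

open Pointwise

noncomputable section

/-- The standard inner product on `n → ℝ`. -/
def dot {n : Type*} [Fintype n] (x y : n → ℝ) : ℝ := ∑ i, x i * y i

/-- The lattice points of `n → ℝ`: points with integer coordinates. -/
def latt (n : Type*) [Fintype n] : Set (n → ℝ) := {x | ∀ i, ∃ m : ℤ, x i = (m : ℝ)}

/-- Polar dual `S* = {y | ⟨x,y⟩ ≥ -1 ∀ x ∈ S}`. -/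
def polarDual {n : Type*} [Fintype n] (S : Set (n → ℝ)) : Set (n → ℝ) :=
  {y | ∀ x ∈ S, -1 ≤ dot x y}

/-- `[S]`: the convex hull of the lattice points of `S`. -/
def latticeHull {n : Type*} [Fintype n] (S : Set (n → ℝ)) : Set (n → ℝ) :=
  convexHull ℝ (S ∩ latt n)

/-- A polytope: the convex hull of a finite set. -/
def IsPolytope {n : Type*} [Fintype n] (P : Set (n → ℝ)) : Prop :=
  ∃ F : Set (n → ℝ), F.Finite ∧ P = convexHull ℝ F

/-- A lattice polytope: the convex hull of a finite set of lattice points. -/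
def IsLatticePolytope {n : Type*} [Fintype n] (P : Set (n → ℝ)) : Prop :=
  ∃ F : Set (n → ℝ), F.Finite ∧ F ⊆ latt n ∧ P = convexHull ℝ F

/-- A full-dimensional polytope `P` with `0` in its interior is Q-reflexive if
`[[P]*] = P*`. -/
def IsQReflexive {n : Type*} [Fintype n] (P : Set (n → ℝ)) : Prop :=
  IsPolytope P ∧ 0 ∈ interior P ∧ latticeHull (polarDual (latticeHull P)) = polarDual P

/-- A full-dimensional lattice polytope `P` with `0` in its interior is almost reflexive
if `[[P*]*] = P`. -/
def IsAlmostReflexive {n : Type*} [Fintype n] (P : Set (n → ℝ)) : Prop :=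
  IsLatticePolytope P ∧ 0 ∈ interior P ∧
    latticeHull (polarDual (latticeHull (polarDual P))) = P

/-- A full-dimensional lattice polytope `P` with `0` in its interior is reflexive
if `P*` is a lattice polytope. -/
def IsReflexive {n : Type*} [Fintype n] (P : Set (n → ℝ)) : Prop :=
  IsLatticePolytope P ∧ 0 ∈ interior P ∧ IsLatticePolytope (polarDual P)

/-!
By the bipolar theorem `Δ** = Δ`, the defining equation `[[Δ]*] = Δ*` of Q-reflexivity is literally
the equation `[[(Δ*)*]*] = Δ*` of almost reflexivity for `Δ*`. What remains is that `Δ*` is then a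
lattice polytope: it is the convex hull of the lattice points of `[Δ]*`, and these lie in the
bounded set `Δ*`, so there are finitely many of them. For a reflexive `Δ` both `[Δ] = Δ` and
`[Δ*] = Δ*`, so both equations reduce to `Δ** = Δ`.
-/

open Filter Bornology Matrix

section Polytope

variable {n : Type*} [Fintype n]

lemma dot_eq_dotProduct (x y : n → ℝ) : dot x y = x ⬝ᵥ y := rfl

lemma abs_dot_le (x y : n → ℝ) : |dot x y| ≤ Fintype.card n * (‖x‖ * ‖y‖) :=
  calc |dot x y| ≤ ∑ i, |x i * y i| := Finset.abs_sum_le_sum_abs _ _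
    _ ≤ ∑ _i : n, ‖x‖ * ‖y‖ := Finset.sum_le_sum fun i _ => by
        rw [abs_mul]
        exact mul_le_mul (norm_le_pi_norm x i) (norm_le_pi_norm y i) (abs_nonneg _) (norm_nonneg _)
    _ = Fintype.card n * (‖x‖ * ‖y‖) := by simp

lemma dot_comm (x y : n → ℝ) : dot x y = dot y x := dotProduct_comm x y

lemma subset_polarDual_polarDual (S : Set (n → ℝ)) : S ⊆ polarDual (polarDual S) :=
  fun x hx y hy => dot_comm x y ▸ hy x hx

theorem polarDual_polarDual {K : Set (n → ℝ)} (hconv : Convex ℝ K) (hclosed : IsClosed K)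
    (h0 : 0 ∈ K) : polarDual (polarDual K) = K := by
  classical
  refine Set.Subset.antisymm ?_ (subset_polarDual_polarDual K)
  intro y hy
  by_contra hyK
  obtain ⟨f, u, hf, hfy⟩ := geometric_hahn_banach_closed_point hconv hclosed hyK
  have hu : 0 < u := by simpa using hf 0 h0
  -- the separating hyperplane `f = u` becomes the face `⟨·, w⟩ = -1` of the polar
  set w := (dotProductEquiv ℝ n).symm ((-u⁻¹) • f.toLinearMap)
  have hw : ∀ x, dot x w = -(f x / u) := fun x => by
    rw [dot_comm, dot_eq_dotProduct, ← dotProductEquiv_apply_apply, LinearEquiv.apply_symm_apply]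
    simp [div_eq_inv_mul]
  have hwK : w ∈ polarDual K := fun x hx => by
    rw [hw, neg_le_neg_iff]; exact (div_le_one hu).2 (hf x hx).le
  have := hy w hwK
  rw [dot_comm, hw, neg_le_neg_iff] at this
  exact this.not_gt ((one_lt_div hu).2 hfy)

lemma zero_mem_interior_polarDual {S : Set (n → ℝ)} (hS : IsBounded S) :
    0 ∈ interior (polarDual S) := by
  obtain ⟨R, hR, hSR⟩ := hS.exists_pos_norm_le
  set C := Fintype.card n * R + 1
  have hC : 0 < C := by positivity
  refine mem_interior.2 ⟨Metric.ball 0 C⁻¹, fun y hy x hx => ?_, Metric.isOpen_ball,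
    Metric.mem_ball_self (inv_pos.2 hC)⟩
  have hCy : C * ‖y‖ < 1 := by
    rw [mem_ball_zero_iff] at hy
    calc C * ‖y‖ < C * C⁻¹ := by gcongr
      _ = 1 := mul_inv_cancel₀ hC.ne'
  have : |dot x y| ≤ C * ‖y‖ :=
    calc |dot x y| ≤ Fintype.card n * (‖x‖ * ‖y‖) := abs_dot_le x y
      _ ≤ Fintype.card n * (R * ‖y‖) := by gcongr; exact hSR x hx
      _ ≤ C * ‖y‖ := by nlinarith [norm_nonneg y]
  linarith [neg_abs_le (dot x y)]

lemma isBounded_polarDual {S : Set (n → ℝ)} (h0 : 0 ∈ interior S) :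
    IsBounded (polarDual S) := by
  classical
  obtain ⟨ε, hε, hball⟩ := Metric.isOpen_iff.1 isOpen_interior 0 h0
  have hcoord : ∀ y ∈ polarDual S, ∀ i, ∀ c : ℝ, |c| < ε → -1 ≤ c * y i := fun y hy i c hc => by
    rw [← single_dotProduct, ← dot_eq_dotProduct]
    exact hy _ (interior_subset (hball (by simpa [Pi.norm_single] using hc)))
  refine isBounded_iff_forall_norm_le.2 ⟨2 / ε, fun y hy => ?_⟩
  refine (pi_norm_le_iff_of_nonneg (by positivity)).2 fun i => ?_
  have hpos := hcoord y hy i (ε / 2) (by rw [abs_of_pos (by positivity)]; linarith)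
  have hneg := hcoord y hy i (-(ε / 2)) (by rw [abs_neg, abs_of_pos (by positivity)]; linarith)
  rw [Real.norm_eq_abs, abs_le, neg_le, le_div_iff₀ hε, le_div_iff₀ hε]
  constructor <;> linarith

lemma latt_eq_range : latt n = Set.range fun (z : n → ℤ) i => (z i : ℝ) := by
  ext x
  constructor
  · intro hx
    choose z hz using hx
    exact ⟨z, funext fun i => (hz i).symm⟩
  · rintro ⟨z, rfl⟩ i
    exact ⟨z i, rfl⟩

lemma finite_of_isBounded_of_subset_latt {S : Set (n → ℝ)} (hb : IsBounded S)
    (hS : S ⊆ latt n) : S.Finite := by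
  set g : (n → ℤ) → n → ℝ := fun z i => (z i : ℝ)
  have hg : Tendsto g cofinite (cocompact _) := by
    simpa only [coprodᵢ_cofinite, coprodᵢ_cocompact] using
      Tendsto.pi_map_coprodᵢ fun _ : n => Int.tendsto_coe_cofinite
  have hpre := tendsto_cofinite_cocompact_iff.1 hg _ hb.isCompact_closure
  refine (hpre.image g).subset fun x hx => ?_
  obtain ⟨z, rfl⟩ : x ∈ Set.range g := latt_eq_range (n := n) ▸ hS hx
  exact ⟨z, subset_closure hx, rfl⟩

lemma inter_latt_subset_latticeHull (S : Set (n → ℝ)) : S ∩ latt n ⊆ latticeHull S :=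
  subset_convexHull ℝ _

lemma isLatticePolytope_latticeHull {S : Set (n → ℝ)} (hb : IsBounded (S ∩ latt n)) :
    IsLatticePolytope (latticeHull S) :=
  ⟨S ∩ latt n, finite_of_isBounded_of_subset_latt hb Set.inter_subset_right,
    Set.inter_subset_right, rfl⟩

lemma IsLatticePolytope.latticeHull_eq {P : Set (n → ℝ)} (h : IsLatticePolytope P) :
    latticeHull P = P := by
  obtain ⟨F, -, hF, rfl⟩ := h
  exact (convexHull_min Set.inter_subset_left (convex_convexHull ℝ F)).antisymm
    (convexHull_mono fun x hx => ⟨subset_convexHull ℝ F hx, hF hx⟩)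

lemma IsPolytope.convex {P : Set (n → ℝ)} (h : IsPolytope P) : Convex ℝ P := by
  obtain ⟨F, -, rfl⟩ := h
  exact convex_convexHull ℝ F

lemma IsPolytope.isCompact {P : Set (n → ℝ)} (h : IsPolytope P) : IsCompact P := by
  obtain ⟨F, hF, rfl⟩ := h
  exact hF.isCompact_convexHull (𝕜 := ℝ)

end Polytope

theorem qreflexive_iff_dual_almostReflexive_general {d : ℕ} (Δ : Set (Fin d → ℝ))
    (hpoly : IsPolytope Δ) (h0 : 0 ∈ interior Δ) :
    (IsQReflexive Δ ↔ IsAlmostReflexive (polarDual Δ)) ∧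
      (IsReflexive Δ → IsQReflexive Δ ∧ IsAlmostReflexive Δ) := by
  have hbip : polarDual (polarDual Δ) = Δ :=
    polarDual_polarDual hpoly.convex hpoly.isCompact.isClosed (interior_subset h0)
  refine ⟨⟨?_, ?_⟩, ?_⟩
  · rintro ⟨-, -, hQ⟩
    have hlat : IsLatticePolytope (polarDual Δ) := hQ ▸ isLatticePolytope_latticeHull
      ((isBounded_polarDual h0).subset (hQ ▸ inter_latt_subset_latticeHull _))
    exact ⟨hlat, zero_mem_interior_polarDual hpoly.isCompact.isBounded, by rw [hbip, hQ]⟩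
  · rintro ⟨-, -, hA⟩
    exact ⟨hpoly, h0, by rwa [hbip] at hA⟩
  · rintro ⟨hlat, -, hdual⟩
    have e1 : latticeHull Δ = Δ := hlat.latticeHull_eq
    have e2 : latticeHull (polarDual Δ) = polarDual Δ := hdual.latticeHull_eq
    exact ⟨⟨hpoly, h0, by rw [e1, e2]⟩, ⟨hlat, h0, by rw [e2, hbip, e1]⟩⟩

/-- Let `Δ ⊆ ℝ^d` be a `d`-dimensional polytope with `0` in its interior.
Then `Δ` is Q-reflexive iff `Δ*` is an almost reflexive lattice polytope.
In particular, every reflexive polytope is both Q-reflexive and almost reflexive. -/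
theorem qreflexive_iff_dual_almostReflexive {d : ℕ} (hd : 0 < d) (Δ : Set (Fin d → ℝ))
    (hpoly : IsPolytope Δ) (h0 : 0 ∈ interior Δ) :
    (IsQReflexive Δ ↔ IsAlmostReflexive (polarDual Δ)) ∧
      (IsReflexive Δ → IsQReflexive Δ ∧ IsAlmostReflexive Δ) :=
  qreflexive_iff_dual_almostReflexive_general Δ hpoly h0
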